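/- arXiv:2312.01333 — 5 statements merged into one kernel-verified Lean document; each statement's English description precedes it below -/
import Mathlib

section
/- For every natural number n ≠ 0, the number of injective finite sequences of elements of an n-element set is strictly greater than the number of partitions of that set; that is, the cardinality of the set of duplicate-free lists over Fin n is strictly greater than the cardinality of the set of partitions of Fin n. -/
/-!
Sending a partition of `Fin n` to the map `x ↦ min [x]` is injective, and this map lies below the
identity; there are exactly `n!` maps `f : Fin n → Fin n` with `f x ≤ x`, so there are at most `n!`
partitions. The `n!` enumerations of `Fin n` together with the empty list are distinct duplicate-free
lists, hence there are strictly more of those.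
-/

open Nat

namespace Setoid

variable {α : Type*} [LinearOrder α] [WellFoundedLT α]

noncomputable def classMin (s : Setoid α) (x : α) : α :=
  wellFounded_lt.min {y | s x y} ⟨x, s.refl x⟩

theorem rel_classMin (s : Setoid α) (x : α) : s x (s.classMin x) :=
  wellFounded_lt.min_mem {y | s x y} _

theorem classMin_le (s : Setoid α) (x : α) : s.classMin x ≤ x :=
  not_lt.mp <| wellFounded_lt.not_lt_min {y | s x y} (s.refl x)

theorem classMin_eq_of_rel (s : Setoid α) {x y : α} (h : s x y) :
    s.classMin x = s.classMin y := by
  have hclass : {z | s x z} = {z | s y z} :=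
    Set.ext fun z => ⟨s.trans (s.symm h), s.trans h⟩
  simp only [classMin, hclass]

theorem ker_classMin (s : Setoid α) : ker s.classMin = s := by
  ext x y
  rw [ker_def]
  refine ⟨fun h => s.trans (s.rel_classMin x) (h ▸ s.symm (s.rel_classMin y)),
    s.classMin_eq_of_rel⟩

theorem classMin_injective : Function.Injective (classMin : Setoid α → α → α) := by
  intro s t h
  rw [← s.ker_classMin, ← t.ker_classMin, h]

end Setoid

theorem Fin.card_subtype_forall_apply_le (n : ℕ) :
    Nat.card {f : Fin n → Fin n // ∀ i, f i ≤ i} = n ! := by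
  rw [Nat.card_congr (Equiv.subtypePiEquivPi (β := fun _ => Fin n) (p := fun i j => j ≤ i)),
    Nat.card_pi]
  calc ∏ i : Fin n, Nat.card {j // j ≤ i}
      = ∏ i : Fin n, ((i : ℕ) + 1) := by
        congr 1 with i
        change Nat.card (Set.Iic i) = _
        rw [Nat.card_eq_fintype_card, Fintype.card_Iic, Fin.card_Iic]
    _ = n ! := by
        rw [Fin.prod_univ_eq_prod_range (· + 1), Finset.prod_range_add_one_eq_factorial]

theorem Nat.card_setoid_fin_le_factorial (n : ℕ) : Nat.card (Setoid (Fin n)) ≤ n ! := by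
  rw [← Fin.card_subtype_forall_apply_le]
  exact Nat.card_le_card_of_injective (fun s => ⟨s.classMin, s.classMin_le⟩)
    fun s t h => Setoid.classMin_injective (congrArg Subtype.val h)

noncomputable def Equiv.Perm.toNodupListOrNil {α : Type*} [Fintype α] :
    Option (Equiv.Perm α) → {l : List α // l.Nodup}
  | none => ⟨[], List.nodup_nil⟩
  | some σ => ⟨Finset.univ.toList.map σ, Finset.univ.nodup_toList.map σ.injective⟩

theorem Equiv.Perm.toNodupListOrNil_injective {α : Type*} [Fintype α] [Nonempty α] :
    Function.Injective (toNodupListOrNil (α := α)) := by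
  have hne : (Finset.univ : Finset α).toList ≠ [] := by
    rw [Ne, Finset.toList_eq_nil]
    exact Finset.univ_nonempty.ne_empty
  rintro (_ | σ) (_ | τ) h <;> simp only [toNodupListOrNil, Subtype.mk.injEq] at h
  · rfl
  · exact absurd h.symm (by simpa using hne)
  · exact absurd h (by simpa using hne)
  · rw [List.map_inj_left] at h
    exact congrArg some (Equiv.ext fun a => h a (by simp))

theorem Nat.card_perm_lt_card_nodup {α : Type*} [Fintype α] [Nonempty α] :
    Nat.card (Equiv.Perm α) < Nat.card {l : List α // l.Nodup} := by
  have := Nat.card_le_card_of_injective _ (Equiv.Perm.toNodupListOrNil_injective (α := α))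
  rwa [Finite.card_option, Nat.add_one_le_iff] at this

theorem seq_inj_gt_part_fin_n (n : ℕ) (hn : n ≠ 0) :
    Nat.card {l : List (Fin n) // l.Nodup} >
      Nat.card {P : Set (Set (Fin n)) // Setoid.IsPartition P} := by
  have : Nonempty (Fin n) := ⟨⟨0, Nat.pos_of_ne_zero hn⟩⟩
  calc Nat.card {P : Set (Set (Fin n)) // Setoid.IsPartition P}
      = Nat.card (Setoid (Fin n)) :=
        (Nat.card_congr (Setoid.Partition.orderIso (Fin n)).toEquiv).symm
    _ ≤ n ! := Nat.card_setoid_fin_le_factorial n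
    _ = Nat.card (Equiv.Perm (Fin n)) := by
        rw [Nat.card_perm, Nat.card_eq_fintype_card, Fintype.card_fin]
    _ < Nat.card {l : List (Fin n) // l.Nodup} := Nat.card_perm_lt_card_nodup
end

section
/- For every Dedekind-infinite set A (i.e., ℵ₀ ≤ |A|), the cardinality of the set of finite sequences of elements of A is strictly less than the cardinality of the set of partitions of A all of whose members are finite: |seq(A)| < |Part_fin(A)|. -/
/-!
Since `A` is infinite, `|seq(A)| = |A| < 2^|A|`, so it suffices to inject the subsets of `A` into
the partitions of `A` into finite blocks. Identify `A` with `A × Bool`; a subset `S` is sent to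
the partition whose blocks are the pairs `{(a, false), (a, true)}` for `a ∈ S` and the singletons
`{(a, b)}` for `a ∉ S`, i.e. the kernel of the map gluing the two copies of each `a ∈ S`. It
remembers `S` as the set of `a` whose two copies share a block.
-/

open Cardinal Set

section

variable {α β : Type*}

theorem Setoid.finite_of_mem_classes_ker {f : α → β} (hf : ∀ b, (f ⁻¹' {b}).Finite)
    {s : Set α} (hs : s ∈ (Setoid.ker f).classes) : s.Finite := by
  obtain ⟨b, rfl⟩ := Setoid.classes_ker_subset_fiber_set f hs
  exact hf b

open Classical in
noncomputable def glueOn (S : Set α) (p : α × Bool) : α × Option Bool :=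
  (p.1, if p.1 ∈ S then none else some p.2)

theorem glueOn_false_eq_glueOn_true_iff {S : Set α} {a : α} :
    glueOn S (a, false) = glueOn S (a, true) ↔ a ∈ S := by
  by_cases ha : a ∈ S <;> simp [glueOn, ha]

theorem finite_glueOn_preimage_singleton (S : Set α) (y : α × Option Bool) :
    (glueOn S ⁻¹' {y}).Finite := by
  refine ((finite_singleton y.1).prod finite_univ).subset fun p hp => ?_
  simp only [mem_preimage, mem_singleton_iff] at hp
  simp [← hp, glueOn]

theorem nonempty_equiv_prod_bool [Infinite α] : Nonempty (α ≃ α × Bool) := by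
  simp [← Cardinal.eq, mul_two]

theorem mk_set_le_mk_finitePartitions [Infinite α] :
    #(Set α) ≤ #{P : Set (Set α) // Setoid.IsPartition P ∧ ∀ s ∈ P, s.Finite} := by
  obtain ⟨e⟩ := nonempty_equiv_prod_bool (α := α)
  have hfin (S : Set α) (y : α × Option Bool) : (e ⁻¹' (glueOn S ⁻¹' {y})).Finite :=
    (finite_glueOn_preimage_singleton S y).preimage e.injective.injOn
  refine mk_le_of_injective (f := fun S => ⟨(Setoid.ker (glueOn S ∘ e)).classes,
    Setoid.isPartition_classes _, fun s => Setoid.finite_of_mem_classes_ker (hfin S)⟩) ?_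
  intro S T hST
  have hker : Setoid.ker (glueOn S ∘ e) = Setoid.ker (glueOn T ∘ e) :=
    Setoid.classes_inj.mpr (congrArg Subtype.val hST)
  ext a
  have hpair := congrArg (fun r : Setoid α => r (e.symm (a, false)) (e.symm (a, true))) hker
  simpa [Setoid.ker_def, glueOn_false_eq_glueOn_true_iff] using hpair

end

theorem seq_lt_partFin_of_dedekind_infinite (A : Type*)
    (hA : Cardinal.aleph0 ≤ Cardinal.mk A) :
    Cardinal.mk (List A) <
      Cardinal.mk {P : Set (Set A) // Setoid.IsPartition P ∧ ∀ s ∈ P, s.Finite} := by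
  have : Infinite A := infinite_iff.mpr hA
  calc #(List A) = #A := mk_list_eq_mk A
    _ < 2 ^ #A := cantor _
    _ = #(Set A) := mk_set.symm
    _ ≤ _ := mk_set_le_mk_finitePartitions
end

section
/- For every infinite set A and every natural number n, the cardinality of the set of finite sequences of elements of A of length at most n is strictly less than the cardinality of the set of partitions of A all of whose members are finite: |seq_{≤n}(A)| < |Part_fin(A)|. -/
/-!
There are at most `|A| < 2^|A|` finite sequences over an infinite `A`. Conversely, an
infinite `A` splits into pairs `{x, x'}` indexed by `A` itself (as `A ≃ A × Bool`), and each
`S ⊆ A` gives a partition into finite blocks: glue the pairs indexed by `S`, leave every other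
point a singleton. Distinct `S` give distinct partitions, so `2^|A|` is at most the number of
finite partitions.
-/

open Cardinal

universe u

namespace Setoid

variable {α β : Type*}

open Classical in
noncomputable def glueFibres (f : α → β) (S : Set β) : Setoid α :=
  ker fun x => if f x ∈ S then Sum.inl (f x) else Sum.inr x

theorem glueFibres_iff {f : α → β} {S : Set β} {x y : α} :
    glueFibres f S x y ↔ x = y ∨ f x = f y ∧ f x ∈ S := by
  rw [glueFibres, ker_def]
  split_ifs <;> grind

theorem glueFibres_iff_of_ne {f : α → β} {S : Set β} {x y : α} (hne : x ≠ y)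
    (hxy : f x = f y) : glueFibres f S x y ↔ f x ∈ S := by
  simp [glueFibres_iff, hne, hxy]

theorem finite_of_mem_classes_glueFibres {f : α → β} (hf : ∀ b, (f ⁻¹' {b}).Finite)
    {S : Set β} {c : Set α} (hc : c ∈ (glueFibres f S).classes) : c.Finite := by
  obtain ⟨y, rfl⟩ := hc
  refine (hf (f y)).subset fun x hx => ?_
  rcases glueFibres_iff.1 hx with rfl | ⟨hxy, -⟩
  exacts [rfl, hxy]

theorem glueFibres_injective {f : α → β} (hf : ∀ b, ∃ x y, x ≠ y ∧ f x = b ∧ f y = b) :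
    Function.Injective (glueFibres f) := by
  intro S T h
  ext b
  obtain ⟨x, y, hne, rfl, hy⟩ := hf b
  rw [← glueFibres_iff_of_ne hne hy.symm, ← glueFibres_iff_of_ne hne hy.symm, h]

end Setoid

open Setoid

def FinitePartitions (α : Type*) : Type _ :=
  {P : Set (Set α) // IsPartition P ∧ ∀ s ∈ P, s.Finite}

theorem mk_set_le_mk_finitePartitions_s4 {α β : Type u} (f : α → β)
    (hfin : ∀ b, (f ⁻¹' {b}).Finite) (htwo : ∀ b, ∃ x y, x ≠ y ∧ f x = b ∧ f y = b) :
    #(Set β) ≤ #(FinitePartitions α) := by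
  refine mk_le_of_injective (f := fun S => (⟨(glueFibres f S).classes, isPartition_classes _,
    fun _ => finite_of_mem_classes_glueFibres hfin⟩ : FinitePartitions α)) fun S T h => ?_
  exact glueFibres_injective htwo (classes_inj.2 (congrArg Subtype.val h))

theorem mk_set_le_mk_finitePartitions_of_infinite (α : Type u) [Infinite α] :
    #(Set α) ≤ #(FinitePartitions α) := by
  obtain ⟨e⟩ : Nonempty (α ≃ α × Bool) := by
    rw [← Cardinal.eq, mk_prod, lift_uzero, mk_fintype Bool, Fintype.card_bool, lift_natCast]
    exact (mul_eq_left (aleph0_le_mk α) ((natCast_lt_aleph0 (n := 2)).le.trans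
      (aleph0_le_mk α)) (by simp)).symm
  refine mk_set_le_mk_finitePartitions_s4 (Prod.fst ∘ e) (fun a => ?_) fun a =>
    ⟨e.symm (a, false), e.symm (a, true), by simp, by simp, by simp⟩
  rw [Set.preimage_comp, Set.preimage_fst_singleton_eq_range]
  exact (Set.finite_range _).preimage e.injective.injOn

theorem seq_le_n_lt_partFin (A : Type*) [Infinite A] (n : ℕ) :
    Cardinal.mk {l : List A // l.length ≤ n} <
      Cardinal.mk {P : Set (Set A) // Setoid.IsPartition P ∧ ∀ s ∈ P, s.Finite} :=
  calc #{l : List A // l.length ≤ n}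
      ≤ #(List A) := mk_subtype_le _
    _ = #A := mk_list_eq_mk A
    _ < #(Set A) := by simpa using cantor #A
    _ ≤ #(FinitePartitions A) := mk_set_le_mk_finitePartitions_of_infinite A
end

section
/- For every set A, there is an injection from the set of finite sequences of elements of A into the set of partitions of the disjoint union A ⊕ ℕ all of whose members are finite; that is, |seq(A)| ≤ |Part_fin(A ⊕ ℕ)|. -/
/-!
Send a list `l` to the partition of `A ⊕ ℕ` whose blocks are `{inl a} ∪ {inr i | l[i]? = some a}`
for `a : A`, together with the singletons `{inr i}` for `i ≥ l.length`. These are the fibres of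
the map fixing every `inl a` and sending `inr i` to `inl l[i]` when that entry exists, and `l` is
read back off the partition: `l[i]? = some a` exactly when `inr i` and `inl a` share a block.
-/

open Set

namespace Sum

variable {α β : Type*}

def collapse (g : β → Option α) : α ⊕ β → α ⊕ β :=
  Sum.elim inl fun b => (g b).elim (inr b) inl

variable {g g' : β → Option α}

theorem collapse_inr_eq_inl {b : β} {a : α} : collapse g (inr b) = inl a ↔ g b = some a := by
  cases h : g b <;> simp [collapse, h]

theorem collapse_eq_self_or_mem_image (x : α ⊕ β) :
    collapse g x = x ∨ x ∈ inr '' {b | (g b).isSome} := by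
  rcases x with a | b
  · exact .inl rfl
  · cases h : g b
    · simp [collapse, h]
    · exact .inr ⟨b, by simp [h], rfl⟩

theorem ker_collapse_injective (h : Setoid.ker (collapse g) = Setoid.ker (collapse g')) :
    g = g' := by
  have key : ∀ {g : β → Option α} b a,
      g b = some a ↔ Setoid.ker (collapse g) (inr b) (inl a) := fun b a => by
    rw [Setoid.ker_def, ← collapse_inr_eq_inl]
    rfl
  funext b
  exact Option.ext fun a => by rw [key, key, h]

theorem finite_of_mem_classes_ker_collapse (hg : {b | (g b).isSome}.Finite)
    {s : Set (α ⊕ β)} (hs : s ∈ (Setoid.ker (collapse g)).classes) : s.Finite := by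
  obtain ⟨y, rfl⟩ := hs
  refine ((hg.image inr).insert (collapse g y)).subset fun x (hx : collapse g x = collapse g y) => ?_
  rcases collapse_eq_self_or_mem_image x with hfix | hmem
  · exact .inl (hfix ▸ hx)
  · exact .inr hmem

end Sum

theorem List.finite_isSome_getElem? {α : Type*} (l : List α) : {i : ℕ | l[i]?.isSome}.Finite :=
  (finite_Iio l.length).subset fun _ hi => by simpa using hi

theorem seq_le_partFin_sum_nat (A : Type) :
    Cardinal.mk (List A) ≤
      Cardinal.mk {P : Set (Set (A ⊕ ℕ)) // Setoid.IsPartition P ∧ ∀ s ∈ P, s.Finite} := by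
  let r : List A → Setoid (A ⊕ ℕ) := fun l => Setoid.ker (Sum.collapse (l[·]?))
  refine Cardinal.mk_le_of_injective (f := fun l => ⟨(r l).classes, Setoid.isPartition_classes _,
    fun _ => Sum.finite_of_mem_classes_ker_collapse l.finite_isSome_getElem?⟩) fun l₁ l₂ h => ?_
  have hr : r l₁ = r l₂ := Setoid.classes_inj.mpr (congrArg Subtype.val h)
  exact List.ext_getElem? (congrFun (Sum.ker_collapse_injective hr))
end

section
/- For every infinite set A, the cardinality of the set of finite subsets of A is strictly less than the cardinality of the set of partitions of A: |fin(A)| < |Part(A)|. -/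
/-!
Fix `a : A`. Every `s ⊆ A \ {a}` yields the partition of `A` whose only non-singleton block is
`insert a s`, and `s` can be read off as the block of `a`; hence there are at least
`2 ^ |A \ {a}| = 2 ^ |A|` partitions, while an infinite `A` has only `|A|` finite subsets.
-/

open Cardinal Set

namespace Setoid

variable {α : Type*}

def collapse (s : Set α) : Setoid α where
  r x y := x = y ∨ x ∈ s ∧ y ∈ s
  iseqv :=
    { refl := fun _ => Or.inl rfl
      symm := fun
        | .inl h => .inl h.symm
        | .inr h => .inr h.symm
      trans := fun
        | .inl rfl, h => h
        | h, .inl rfl => h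
        | .inr ⟨hx, _⟩, .inr ⟨_, hz⟩ => .inr ⟨hx, hz⟩ }

theorem collapse_rel {s : Set α} {x y : α} : collapse s x y ↔ x = y ∨ x ∈ s ∧ y ∈ s :=
  Iff.rfl

theorem collapse_insert_rel_iff {a x : α} (hx : x ≠ a) (s : Set α) :
    collapse (insert a s) a x ↔ x ∈ s := by
  simp [collapse_rel, hx.symm, hx]

theorem injective_collapse_insert_image_val (a : α) :
    Function.Injective fun s : Set ({a}ᶜ : Set α) => collapse (insert a ((↑) '' s)) := by
  intro s t hst
  ext ⟨x, hx⟩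
  have hxa : x ≠ a := hx
  simpa [collapse_insert_rel_iff hxa, hxa] using congrArg (fun r : Setoid α => r a x) hst

theorem two_power_mk_compl_singleton_le_mk (a : α) : 2 ^ #({a}ᶜ : Set α) ≤ #(Setoid α) := by
  rw [← mk_set]
  exact mk_le_of_injective (injective_collapse_insert_image_val a)

theorem mk_lt_mk_setoid [Infinite α] : #α < #(Setoid α) := by
  obtain ⟨a⟩ := (inferInstance : Nonempty α)
  have hcompl : #({a}ᶜ : Set α) = #α :=
    mk_compl_of_infinite _ (by simpa using one_lt_aleph0.trans_le (aleph0_le_mk α))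
  calc #α < 2 ^ #α := cantor _
    _ = 2 ^ #({a}ᶜ : Set α) := by rw [hcompl]
    _ ≤ #(Setoid α) := two_power_mk_compl_singleton_le_mk a

end Setoid

theorem finsets_lt_part (A : Type*) [Infinite A] :
    Cardinal.mk {s : Set A // s.Finite} <
      Cardinal.mk {P : Set (Set A) // Setoid.IsPartition P} := by
  calc #{s : Set A // s.Finite} = #(Finset A) := (mk_congr OrderIso.finsetSetFinite.toEquiv).symm
    _ = #A := mk_finset_of_infinite A
    _ < #(Setoid A) := Setoid.mk_lt_mk_setoid
    _ = #{P : Set (Set A) // Setoid.IsPartition P} :=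
      mk_congr (Setoid.Partition.orderIso A).toEquiv
end
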